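/- arXiv:1907.01135 — 7 statements merged into one kernel-verified Lean document; each statement's English description precedes it below -/
import Mathlib

section
/- Let w_1, ..., w_m be positive integers with W = w_1 + ... + w_m, and let S be a finite set of integers such that for all s, t in S, t - s cannot be written as sum_{i=1}^m a_i w_i with all a_i < 0. Then the elements of S are pairwise incongruent modulo W; in particular, the cardinality of S is at most W. -/
/-- `S` is strongly exceptional with respect to the weights `w`:
no difference of two elements of `S` is a combination `∑ aᵢ wᵢ` with all `aᵢ < 0`. -/
def StronglyExceptional (m : ℕ) (w : Fin m → ℤ) (S : Finset ℤ) : Prop :=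
  ∀ s ∈ S, ∀ t ∈ S, ¬ ∃ a : Fin m → ℤ, (∀ i, a i < 0) ∧ t - s = ∑ i, a i * w i

theorem stmt_1 (m : ℕ) (w : Fin m → ℤ) (hw : ∀ i, 0 < w i)
    (W : ℤ) (hW : W = ∑ i, w i)
    (S : Finset ℤ) (hS : StronglyExceptional m w S) :
    (∀ s ∈ S, ∀ t ∈ S, s ≠ t → s % W ≠ t % W) ∧ (S.card : ℤ) ≤ W := by
  have key : ∀ s ∈ S, ∀ t ∈ S, s ≠ t → s % W ≠ t % W := by
    intro s hs t ht hst hmod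
    have hdvd : W ∣ t - s := Int.ModEq.dvd hmod
    obtain ⟨k, hk⟩ := hdvd
    have hk0 : k ≠ 0 := by
      rintro rfl
      simp at hk
      exact hst (by linarith)
    rcases lt_or_gt_of_ne hk0 with hkneg | hkpos
    · exact hS s hs t ht ⟨fun _ => k, fun i => hkneg, by
        simp only [hk, hW, Finset.sum_mul]
        exact Finset.sum_congr rfl fun i _ => mul_comm _ _⟩
    · exact hS t ht s hs ⟨fun _ => -k, fun i => by simp; linarith, by
        rw [show s - t = (∑ i, w i) * (-k) by rw [← hW]; linarith, Finset.sum_mul]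
        exact Finset.sum_congr rfl fun i _ => mul_comm _ _⟩
  refine ⟨key, ?_⟩
  rcases eq_or_ne m 0 with rfl | hm
  · have hW0 : W = 0 := by simp [hW]
    have hSe : S = ∅ := by
      by_contra h
      obtain ⟨s, hs⟩ := Finset.nonempty_iff_ne_empty.2 h
      exact hS s hs s hs ⟨fun i => -1, fun i => by norm_num, by simp⟩
    simp [hSe, hW0]
  · have hWpos : 0 < W := by
      rw [hW]
      haveI : NeZero m := ⟨hm⟩
      exact Finset.sum_pos (fun i _ => hw i) Finset.univ_nonempty
    have hinj : Set.InjOn (· % W) S := by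
      intro s hs t ht h
      by_contra hne
      exact key s hs t ht hne h
    have hsub : S.image (· % W) ⊆ Finset.Ico 0 W := by
      intro x hx
      obtain ⟨s, _, rfl⟩ := Finset.mem_image.1 hx
      exact Finset.mem_Ico.2 ⟨Int.emod_nonneg s hWpos.ne', Int.emod_lt_of_pos s hWpos⟩
    have := Finset.card_le_card hsub
    rw [Finset.card_image_of_injOn hinj] at this
    have hIco : (Finset.Ico (0:ℤ) W).card = W.toNat := by
      simp [Int.toNat_of_nonneg hWpos.le]
    omega
end

section
/- Let w_1, ..., w_m be positive integers with W = sum w_i, and let S be a finite nonempty set of integers that is strongly exceptional, i.e. for all s, t in S, t - s is not expressible as sum a_i w_i with all integer coefficients a_i < 0. Let s_1 = min S. Then the set S' = (S \ {s_1}) ∪ {s_1 + W} is also strongly exceptional. -/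
theorem stmt_3 (m : ℕ) (w : Fin m → ℤ) (hw : ∀ i, 0 < w i)
    (W : ℤ) (hW : W = ∑ i, w i)
    (S : Finset ℤ) (hne : S.Nonempty) (hS : StronglyExceptional m w S) :
    StronglyExceptional m w
      (insert (S.min' hne + W) (S.erase (S.min' hne))) := by
  intro s hs t ht h
  obtain ⟨a, ha, hsum⟩ := h
  set s₁ := S.min' hne with hs₁def
  have hmem : s₁ ∈ S := S.min'_mem hne
  simp only [Finset.mem_insert, Finset.mem_erase] at hs ht
  rcases hs with hs | ⟨hsne, hsS⟩ <;> rcases ht with ht | ⟨htne, htS⟩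
  · -- s = t = s₁ + W
    subst hs; subst ht
    exact hS s₁ hmem s₁ hmem ⟨a, ha, by linarith [hsum]⟩
  · -- s = s₁ + W, t ∈ S, t ≠ s₁
    have ht' : s₁ < t := lt_of_le_of_ne (S.min'_le t htS) (Ne.symm htne)
    have heq : t - s₁ = ∑ i, (a i + 1) * w i := by
      have : ∑ i, (a i + 1) * w i = (∑ i, a i * w i) + ∑ i, w i := by
        rw [← Finset.sum_add_distrib]; congr 1; ext i; ring
      rw [this, ← hW, ← hsum, hs]; ring
    have hle : ∑ i, (a i + 1) * w i ≤ 0 :=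
      Finset.sum_nonpos fun i _ => by nlinarith [ha i, hw i]
    linarith
  · -- t = s₁ + W, s ∈ S
    refine hS s hsS s₁ hmem ⟨fun i => a i - 1, fun i => by show a i - 1 < 0; linarith [ha i], ?_⟩
    have : ∑ i, (a i - 1) * w i = (∑ i, a i * w i) - ∑ i, w i := by
      rw [← Finset.sum_sub_distrib]; congr 1; ext i; ring
    rw [this, ← hW, ← hsum, ht]; ring
  · exact hS s hsS t htS ⟨a, ha, hsum⟩
end

section
/- Let w_1, ..., w_m be positive integers with W = sum w_i, let S be a strongly exceptional set of integers with s_1 = min S, let J be a proper subset of {1, ..., m}, and set s = s_1 + sum_{j in J} w_j. Then for every t in S, neither t - s nor s - t is expressible as sum_{i=1}^m a_i w_i with all integer coefficients a_i < 0. -/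
theorem stmt_4 (m : ℕ) (w : Fin m → ℤ) (hw : ∀ i, 0 < w i)
    (W : ℤ) (hW : W = ∑ i, w i)
    (S : Finset ℤ) (hne : S.Nonempty) (hS : StronglyExceptional m w S)
    (J : Finset (Fin m)) (hJ : J ⊂ Finset.univ)
    (s : ℤ) (hs : s = S.min' hne + ∑ j ∈ J, w j) :
    ∀ t ∈ S,
      (¬ ∃ a : Fin m → ℤ, (∀ i, a i < 0) ∧ t - s = ∑ i, a i * w i) ∧
      (¬ ∃ a : Fin m → ℤ, (∀ i, a i < 0) ∧ s - t = ∑ i, a i * w i) := by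
  intro t ht
  have hmin : S.min' hne ∈ S := S.min'_mem hne
  have hJsum : ∑ i, (if i ∈ J then (1:ℤ) else 0) * w i = ∑ j ∈ J, w j := by
    simp only [ite_mul, one_mul, zero_mul]
    rw [Finset.sum_ite_mem, Finset.univ_inter]
  constructor
  · rintro ⟨a, ha, heq⟩
    obtain ⟨i0, -, hi0⟩ := Finset.exists_of_ssubset hJ
    set b : Fin m → ℤ := fun i => a i + (if i ∈ J then 1 else 0) with hb
    have hsum : ∑ i, b i * w i = t - S.min' hne := by
      simp only [hb, add_mul, Finset.sum_add_distrib, ← heq, hJsum, hs]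
      ring
    have hlt : ∑ i, b i * w i < 0 := by
      have : ∑ i, b i * w i < ∑ i : Fin m, (0:ℤ) := by
        apply Finset.sum_lt_sum
        · intro i _
          have hai := ha i
          have : b i ≤ 0 := by
            simp only [hb]
            split <;> omega
          exact mul_nonpos_of_nonpos_of_nonneg this (hw i).le
        · refine ⟨i0, Finset.mem_univ _, ?_⟩
          have hai := ha i0
          have hb0 : b i0 < 0 := by simp only [hb, if_neg hi0]; omega
          exact mul_neg_of_neg_of_pos hb0 (hw i0)
      simpa using this
    have := S.min'_le t ht
    omega
  · rintro ⟨a, ha, heq⟩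
    apply hS t ht (S.min' hne) hmin
    refine ⟨fun i => a i - (if i ∈ J then 1 else 0), fun i => by have := ha i; dsimp only; split <;> omega, ?_⟩
    simp only [sub_mul, Finset.sum_sub_distrib, ← heq, hJsum, hs]
    ring
end

section
/- Let w_1, ..., w_m be positive integers with W = sum w_i, and let S be a strongly exceptional set of integers of maximal cardinality |S| = W. Let s_1 = min S. Then for every proper subset J of {1, ..., m}, the integer s_1 + sum_{j in J} w_j belongs to S. -/
theorem stmt_5 (m : ℕ) (w : Fin m → ℤ) (hw : ∀ i, 0 < w i)
    (W : ℤ) (hW : W = ∑ i, w i)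
    (S : Finset ℤ) (hne : S.Nonempty) (hS : StronglyExceptional m w S)
    (hcard : (S.card : ℤ) = W)
    (J : Finset (Fin m)) (hJ : J ⊂ Finset.univ) :
    S.min' hne + ∑ j ∈ J, w j ∈ S := by
  set s1 := S.min' hne with hs1
  have hs1mem : s1 ∈ S := S.min'_mem hne
  have hWpos : 0 < W := by
    rw [← hcard]
    exact_mod_cast Finset.card_pos.mpr hne
  -- sum helper
  have hsum : ∀ k c : ℤ, ∑ i, (k + if i ∈ J then c else 0) * w i = k * W + c * ∑ j ∈ J, w j := by
    intro k c
    rw [hW, Finset.mul_sum, Finset.mul_sum, ← Finset.univ_inter J, ← Finset.sum_ite_mem,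
      ← Finset.sum_add_distrib]
    exact Finset.sum_congr rfl fun i _ => by by_cases h : i ∈ J <;> simp [h] <;> ring
  -- J's sum is strictly less than W
  have hJlt : ∑ j ∈ J, w j < W := by
    obtain ⟨i, _, hiJ⟩ := Finset.exists_of_ssubset hJ
    rw [hW]
    exact Finset.sum_lt_sum_of_subset hJ.subset (Finset.mem_univ i) hiJ (hw i)
      (fun j _ _ => (hw j).le)
  have hJnn : 0 ≤ ∑ j ∈ J, w j := Finset.sum_nonneg fun j _ => (hw j).le
  -- pairwise incongruence mod W
  have hkey : ∀ s ∈ S, ∀ t ∈ S, s % W = t % W → s = t := by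
    intro s hs t ht h
    by_contra hne'
    have hdvd : W ∣ t - s := Int.ModEq.dvd h
    obtain ⟨c, hc⟩ := hdvd
    have hc0 : c ≠ 0 := by
      intro h0; rw [h0, mul_zero] at hc; omega
    rcases lt_or_gt_of_ne hc0 with hlt | hgt
    · exact hS s hs t ht ⟨fun _ => c, fun i => hlt, by
        rw [hc, hW, Finset.sum_mul]; exact Finset.sum_congr rfl fun i _ => mul_comm _ _⟩
    · exact hS t ht s hs ⟨fun _ => -c, fun i => by show -c < 0; omega, by
        rw [show s - t = -(t - s) by ring, hc, hW, Finset.sum_mul, ← Finset.sum_neg_distrib]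
        exact Finset.sum_congr rfl fun i _ => by ring⟩
  -- S.image (· % W) = Ico 0 W
  have himg : S.image (· % W) = Finset.Ico (0 : ℤ) W := by
    apply Finset.eq_of_subset_of_card_le
    · intro x hx
      obtain ⟨s, _, rfl⟩ := Finset.mem_image.mp hx
      exact Finset.mem_Ico.mpr ⟨Int.emod_nonneg _ (ne_of_gt hWpos), Int.emod_lt_of_pos _ hWpos⟩
    · rw [Finset.card_image_of_injOn (fun s hs t ht h => hkey s hs t ht h)]
      rw [Int.card_Ico]
      omega
  -- find t ∈ S congruent to x
  set x := s1 + ∑ j ∈ J, w j with hx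
  have hxmem : x % W ∈ S.image (· % W) := by
    rw [himg]
    exact Finset.mem_Ico.mpr ⟨Int.emod_nonneg _ (ne_of_gt hWpos), Int.emod_lt_of_pos _ hWpos⟩
  obtain ⟨t, ht, htx⟩ := Finset.mem_image.mp hxmem
  have hdvd : W ∣ t - x := Int.ModEq.dvd (Int.ModEq.symm htx)
  obtain ⟨k, hk⟩ := hdvd
  -- t = x + W * k
  have htval : t = s1 + ∑ j ∈ J, w j + W * k := by rw [hx] at hk; omega
  rcases lt_trichotomy k 0 with hneg | hzero | hpos
  · rcases eq_or_lt_of_le (by omega : k ≤ -1) with heq | hlt2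
    · -- k = -1 : t < s1, contradiction with min
      exfalso
      have : t < s1 := by rw [htval, heq]; omega
      exact absurd (S.min'_le t ht) (by omega)
    · -- k ≤ -2 : t - s1 = k*W + ∑_J, all coeffs k + ite ≤ -1
      exfalso
      refine hS s1 hs1mem t ht ⟨fun i => k + if i ∈ J then 1 else 0, fun i => ?_, ?_⟩
      · by_cases h : i ∈ J <;> simp [h] <;> omega
      · rw [hsum k 1, htval]; ring
  · rw [htval, hzero, mul_zero, add_zero] at ht; exact ht
  · -- k ≥ 1 : s1 - t = ∑ (-k - ite) w i
    exfalso
    refine hS t ht s1 hs1mem ⟨fun i => -k + if i ∈ J then -1 else 0, fun i => ?_, ?_⟩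
    · by_cases h : i ∈ J <;> simp [h] <;> omega
    · rw [hsum (-k) (-1), htval]; ring
end

section
/- Let w_1, ..., w_m be positive integers with W = sum w_i, and let S be a strongly exceptional set of integers with |S| = W and max S - min S >= W. Let S' = (S \ {min S}) ∪ {min S + W}. Then S' is strongly exceptional, |S'| = W, and max S' - min S' < max S - min S. -/
theorem stmt_7 (m : ℕ) (w : Fin m → ℤ) (hw : ∀ i, 0 < w i)
    (W : ℤ) (hW : W = ∑ i, w i)
    (S : Finset ℤ) (hne : S.Nonempty) (hS : StronglyExceptional m w S)
    (hcard : (S.card : ℤ) = W)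
    (hdiam : W ≤ S.max' hne - S.min' hne)
    (S' : Finset ℤ)
    (hS' : S' = insert (S.min' hne + W) (S.erase (S.min' hne))) :
    StronglyExceptional m w S' ∧ (S'.card : ℤ) = W ∧
    ∀ (hne' : S'.Nonempty),
      S'.max' hne' - S'.min' hne' < S.max' hne - S.min' hne := by
  set μ := S.min' hne with hμdef
  set M := S.max' hne with hMdef
  have hμ : μ ∈ S := S.min'_mem hne
  have hWpos : 0 < W := by rw [← hcard]; exact_mod_cast Finset.card_pos.mpr hne
  -- sum bound for nonpositive coefficients
  have key : ∀ a : Fin m → ℤ, (∀ i, a i ≤ 0) → ∑ i, a i * w i ≤ 0 := by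
    intro a ha
    apply Finset.sum_nonpos
    intro i _
    nlinarith [ha i, hw i]
  have keyneg : ∀ a : Fin m → ℤ, (∀ i, a i < 0) → ∑ i, a i * w i ≤ -W := by
    intro a ha
    have : ∑ i, a i * w i ≤ ∑ i, (-1) * w i := by
      apply Finset.sum_le_sum
      intro i _
      nlinarith [ha i, hw i]
    simpa [hW, Finset.sum_neg_distrib, neg_one_mul] using this
  have hμW_not : μ + W ∉ S := by
    intro h
    apply hS (μ + W) h μ hμ
    refine ⟨fun _ => -1, fun i => by norm_num, ?_⟩
    have : ∑ i : Fin m, (-1 : ℤ) * w i = -W := by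
      simp [hW, neg_one_mul]
    rw [this]; ring
  have hSE' : StronglyExceptional m w S' := by
    intro s hs t ht
    rintro ⟨a, ha, hsum⟩
    rw [hS', Finset.mem_insert, Finset.mem_erase] at hs ht
    rcases hs with hs | ⟨hsne, hsS⟩
    · rcases ht with ht | ⟨htne, htS⟩
      · -- t = s = μ + W, difference 0
        have h0 : (0 : ℤ) = ∑ i, a i * w i := by rw [ht, hs] at hsum; simpa using hsum
        have := keyneg a ha
        linarith
      · -- s = μ + W, t ∈ S \ {μ}
        have hb : ∑ i, (a i + 1) * w i ≤ 0 := by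
          apply key
          intro i
          have := ha i; omega
        have hsum2 : ∑ i, (a i + 1) * w i = t - μ := by
          have : ∑ i, (a i + 1) * w i = (∑ i, a i * w i) + ∑ i, w i := by
            rw [← Finset.sum_add_distrib]
            congr 1; ext i; ring
          rw [this, ← hsum, hs, ← hW]; ring
        have htμ : μ ≤ t := S.min'_le t htS
        have : μ < t := lt_of_le_of_ne htμ (Ne.symm htne)
        linarith [hsum2 ▸ hb]
    · rcases ht with ht | ⟨htne, htS⟩
      · -- t = μ + W, s ∈ S
        apply hS s hsS μ hμ
        refine ⟨fun i => a i - 1, fun i => by show a i - 1 < 0; have := ha i; omega, ?_⟩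
        have : ∑ i, (a i - 1) * w i = (∑ i, a i * w i) - ∑ i, w i := by
          rw [← Finset.sum_sub_distrib]
          congr 1; ext i; ring
        rw [this, ← hsum, ht, ← hW]; ring
      · exact hS s hsS t htS ⟨a, ha, hsum⟩
  refine ⟨hSE', ?_, ?_⟩
  · have h1 : μ + W ∉ S.erase μ := fun h => hμW_not (Finset.mem_of_mem_erase h)
    rw [hS', Finset.card_insert_of_notMem h1, Finset.card_erase_of_mem hμ]
    have hc : 1 ≤ S.card := Finset.card_pos.mpr hne
    rw [← hcard]
    push_cast [Nat.sub_add_cancel hc]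
    ring
  · intro hne'
    have hmax : S'.max' hne' ≤ M := by
      apply Finset.max'_le
      intro y hy
      rw [hS', Finset.mem_insert, Finset.mem_erase] at hy
      rcases hy with hy | ⟨_, hyS⟩
      · rw [hy]; linarith
      · exact S.le_max' y hyS
    have hmin : μ < S'.min' hne' := by
      have : ∀ y ∈ S', μ < y := by
        intro y hy
        rw [hS', Finset.mem_insert, Finset.mem_erase] at hy
        rcases hy with hy | ⟨hyne, hyS⟩
        · rw [hy]; linarith
        · exact lt_of_le_of_ne (S.min'_le y hyS) (Ne.symm hyne)
      exact this _ (S'.min'_mem hne')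
    linarith
end

section
/- In the rank-two lattice setting: let T be a strongly exceptional subset of L, α : L → ℝ ℤ-linear with α(E_i) > 0 for i in I_+ and α(E_i) < 0 for i in I_-, and let D_0 in T attain the maximum of α on T. Then for every proper subset J of I_+ and every D_k in T, the difference (D_0 - E_J) - D_k is not an ExtM-class. -/
section RankTwo

variable {L : Type*} [AddCommGroup L] {m : ℕ}

/-- All coefficients `≤ -1`. -/
def IsNegAll (E : Fin m → L) (D : L) : Prop :=
  ∃ a : Fin m → ℤ, (∀ i, a i ≤ -1) ∧ D = ∑ i, a i • E i

/-- Coefficients `≤ -1` on `Iminus` and `≥ 0` on `Iplus`. -/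
def IsExtP (E : Fin m → L) (Iplus Iminus : Finset (Fin m)) (D : L) : Prop :=
  ∃ a : Fin m → ℤ, (∀ i ∈ Iminus, a i ≤ -1) ∧ (∀ i ∈ Iplus, 0 ≤ a i) ∧
    D = ∑ i, a i • E i

/-- Coefficients `≤ -1` on `Iplus` and `≥ 0` on `Iminus`. -/
def IsExtM (E : Fin m → L) (Iplus Iminus : Finset (Fin m)) (D : L) : Prop :=
  ∃ a : Fin m → ℤ, (∀ i ∈ Iplus, a i ≤ -1) ∧ (∀ i ∈ Iminus, 0 ≤ a i) ∧
    D = ∑ i, a i • E i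

/-- No difference of two elements of `T` is a NegAll-, ExtP- or ExtM-class. -/
def StronglyExc (E : Fin m → L) (Iplus Iminus : Finset (Fin m)) (T : Set L) : Prop :=
  ∀ D ∈ T, ∀ D' ∈ T,
    ¬ IsNegAll E (D' - D) ∧ ¬ IsExtP E Iplus Iminus (D' - D) ∧
    ¬ IsExtM E Iplus Iminus (D' - D)

end RankTwo


theorem stmt_10 {L : Type*} [AddCommGroup L] [Module.Free ℤ L] {m : ℕ}
    (E : Fin m → L) (Iplus Iminus : Finset (Fin m))
    (hdisj : Disjoint Iplus Iminus) (hunion : Iplus ∪ Iminus = Finset.univ)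
    (hpne : Iplus.Nonempty) (hmne : Iminus.Nonempty)
    (T : Set L) (hT : StronglyExc E Iplus Iminus T)
    (α : L →+ ℝ)
    (hαp : ∀ i ∈ Iplus, 0 < α (E i)) (hαm : ∀ i ∈ Iminus, α (E i) < 0)
    (D₀ : L) (hD₀ : D₀ ∈ T) (hmax : ∀ D ∈ T, α D ≤ α D₀)
    (J : Finset (Fin m)) (hJ : J ⊂ Iplus) :
    ∀ Dk ∈ T,
      ¬ IsExtM E Iplus Iminus ((D₀ - ∑ j ∈ J, E j) - Dk) := by
  rintro Dk hDk ⟨a, hap, ham, heq⟩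
  have key := congrArg α heq
  rw [map_sub, map_sub, map_sum, map_sum] at key
  simp only [map_zsmul, zsmul_eq_mul] at key
  have hsplit : ∑ i, (a i : ℝ) * α (E i)
      = ∑ i ∈ Iplus, (a i : ℝ) * α (E i) + ∑ i ∈ Iminus, (a i : ℝ) * α (E i) := by
    rw [← hunion, Finset.sum_union hdisj]
  have hA : ∑ i ∈ Iminus, (a i : ℝ) * α (E i) ≤ 0 := by
    apply Finset.sum_nonpos
    intro i hi
    exact mul_nonpos_of_nonneg_of_nonpos (by exact_mod_cast ham i hi) (le_of_lt (hαm i hi))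
  have hB : ∑ i ∈ Iplus, (a i : ℝ) * α (E i) ≤ ∑ i ∈ Iplus, (-1 : ℝ) * α (E i) := by
    apply Finset.sum_le_sum
    intro i hi
    exact mul_le_mul_of_nonneg_right (by exact_mod_cast hap i hi) (le_of_lt (hαp i hi))
  have hC : ∑ j ∈ J, α (E j) < ∑ i ∈ Iplus, α (E i) := by
    obtain ⟨i, hi, hni⟩ := Finset.exists_of_ssubset hJ
    exact Finset.sum_lt_sum_of_subset hJ.1 hi hni (hαp i hi)
      (fun j hj _ => le_of_lt (hαp j hj))
  have hB' : ∑ i ∈ Iplus, (-1 : ℝ) * α (E i) = -∑ i ∈ Iplus, α (E i) := by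
    rw [← Finset.sum_neg_distrib]; congr 1; ext i; ring
  have hmaxk := hmax Dk hDk
  rw [hsplit] at key
  linarith
end

section
/- In the rank-two lattice setting: let T be a strongly exceptional subset of L and D_0 in T. Then at least one of the following holds: (a) for every D_k in T and every subset J of I_+, the element (D_0 - E_J) - D_k is not a NegAll-class; or (b) for every D_j in T and every subset K of I_-, the element D_j - (D_0 + E_K) is not a NegAll-class. -/
theorem stmt_11 {L : Type*} [AddCommGroup L] [Module.Free ℤ L] {m : ℕ}
    (E : Fin m → L) (Iplus Iminus : Finset (Fin m))
    (hdisj : Disjoint Iplus Iminus) (hunion : Iplus ∪ Iminus = Finset.univ)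
    (hpne : Iplus.Nonempty) (hmne : Iminus.Nonempty)
    (T : Set L) (hT : StronglyExc E Iplus Iminus T)
    (D₀ : L) (hD₀ : D₀ ∈ T) :
    (∀ Dk ∈ T, ∀ J ⊆ Iplus,
        ¬ IsNegAll E ((D₀ - ∑ j ∈ J, E j) - Dk)) ∨
    (∀ Dj ∈ T, ∀ K ⊆ Iminus,
        ¬ IsNegAll E (Dj - (D₀ + ∑ k ∈ K, E k))) := by
  by_contra h
  push_neg at h
  obtain ⟨⟨Dk, hDk, J, hJ, a, ha, hae⟩, ⟨Dj, hDj, K, hK, b, hb, hbe⟩⟩ := h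
  refine (hT Dk hDk Dj hDj).1 ⟨fun i => a i + b i
      + (if i ∈ J then 1 else 0) + (if i ∈ K then 1 else 0), ?_, ?_⟩
  · intro i
    have h1 := ha i
    have h2 := hb i
    have hJK : ¬ (i ∈ J ∧ i ∈ K) := by
      rintro ⟨h3, h4⟩
      exact (Finset.disjoint_left.mp hdisj (hJ h3) (hK h4))
    by_cases hiJ : i ∈ J <;> by_cases hiK : i ∈ K
    · exact (hJK ⟨hiJ, hiK⟩).elim
    all_goals simp [hiJ, hiK]; omega
  · have key : Dj - Dk = ((D₀ - ∑ j ∈ J, E j) - Dk) + (Dj - (D₀ + ∑ k ∈ K, E k))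
        + (∑ j ∈ J, E j) + (∑ k ∈ K, E k) := by abel
    have hJs : (∑ j ∈ J, E j) = ∑ i, (if i ∈ J then (1:ℤ) else 0) • E i := by
      rw [eq_comm]
      simp [ite_smul, Finset.sum_ite_mem]
    have hKs : (∑ k ∈ K, E k) = ∑ i, (if i ∈ K then (1:ℤ) else 0) • E i := by
      rw [eq_comm]
      simp [ite_smul, Finset.sum_ite_mem]
    rw [key, hae, hbe, hJs, hKs, ← Finset.sum_add_distrib, ← Finset.sum_add_distrib,
      ← Finset.sum_add_distrib]
    congr 1
    ext i
    simp [add_smul]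
end
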